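/- For every ε > 0 there exists N such that for all n ≥ N and every integer r with 1 ≤ r ≤ n/2, there exists a nonzero function f : {0,1}^n → ℝ supported on the Hamming ball B_r of radius r around 0^n such that ⟨Af, f⟩ ≥ (2·√(r·(n − r)) − εn)·⟨f, f⟩, where A is the adjacency operator of the Hamming graph (i.e., the maximal Rayleigh quotient λ_{B_r} of A over functions supported on B_r satisfies λ_{B_r} ≥ 2√(r(n−r)) − εn). -/

import Mathlib

/-- The adjacency operator of the Hamming graph on `{0,1}^n`. -/
def adjOp {n : ℕ} (f : (Fin n → Bool) → ℝ) (x : Fin n → Bool) : ℝ :=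
  ∑ y ∈ Finset.univ.filter fun y => hammingDist x y = 1, f y

/-- Inner product `⟨f, g⟩ = E_x[f(x)·g(x)]`, `x` uniform in `{0,1}^n`. -/
noncomputable def cubeInner {n : ℕ} (f g : (Fin n → Bool) → ℝ) : ℝ :=
  (∑ x, f x * g x) / 2 ^ n

/-- Hamming weight of `x ∈ {0,1}^n`. -/
def hWt {n : ℕ} (x : Fin n → Bool) : ℕ := (Finset.univ.filter fun i => x i = true).card

/-!
Test functions are radial, `f x = ψ (wt x) / √(n.choose (wt x))`. In the orthonormal basis of
normalized layer indicators, `A` acts on radial functions as the path on the layers `0, …, n`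
with weight `√(k (n + 1 - k))` on the edge between layers `k - 1` and `k`. On the top `m`
layers `r + 1 - m, …, r` of `B_r` these weights are at least `√((r + 2 - m)(n - r))`, so taking
for `ψ` the Perron eigenvector `j ↦ sin (j π / (m + 1))` of the path on `m` vertices gives
Rayleigh quotient at least `2 √((r + 2 - m)(n - r)) cos (π / (m + 1))`. With `m ≈ 10 / ε` and
`n ≥ 16 m / ε²` this is at least `2 √(r (n - r)) - ε n`. When `r + 1 < m`, already
`2 √(r (n - r)) ≤ ε n`, and the window of all `r + 1` layers, whose bound is nonnegative,
serves.
-/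

open Finset Real

lemma cubeInner_self_nonneg {n : ℕ} (f : (Fin n → Bool) → ℝ) : 0 ≤ cubeInner f f :=
  div_nonneg (sum_nonneg fun x _ => mul_self_nonneg (f x)) (by positivity)

section Radial

variable {n : ℕ}

lemma sum_comp_hWt {M : Type*} [AddCommMonoid M] (F : ℕ → M) :
    ∑ x : Fin n → Bool, F (hWt x) = ∑ k ∈ range (n + 1), n.choose k • F k := by
  let e : (Fin n → Bool) ≃ Finset (Fin n) :=
    { toFun := fun x => univ.filter fun i => x i = true
      invFun := fun s i => decide (i ∈ s)
      left_inv := fun x => by funext i; simp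
      right_inv := fun s => by ext i; simp }
  rw [Fintype.sum_equiv e (fun x => F (hWt x)) (fun s => F #s) fun _ => rfl, ← powerset_univ,
    sum_powerset_apply_card, card_univ, Fintype.card_fin]

lemma hWt_le (x : Fin n → Bool) : hWt x ≤ n :=
  (card_filter_le _ _).trans_eq (card_fin n)

lemma hammingDist_eq_one_iff {ι : Type*} [Fintype ι] [DecidableEq ι] {x y : ι → Bool} :
    hammingDist x y = 1 ↔ ∃ i, y = Function.update x i (!x i) := by
  simp only [hammingDist, card_eq_one, Finset.ext_iff, mem_filter, mem_univ, true_and,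
    mem_singleton]
  constructor
  · rintro ⟨i, hi⟩
    refine ⟨i, funext fun j => ?_⟩
    rcases eq_or_ne j i with rfl | hj
    · have hxy := (hi j).2 rfl
      revert hxy
      cases x j <;> cases y j <;> simp
    · simpa [hj] using (not_not.1 ((hi j).not.2 hj)).symm
  · rintro ⟨i, rfl⟩
    exact ⟨i, fun j => by rcases eq_or_ne j i with rfl | hj <;> simp [*]⟩

lemma adjOp_eq_sum_update (f : (Fin n → Bool) → ℝ) (x : Fin n → Bool) :
    adjOp f x = ∑ i, f (Function.update x i (!x i)) := by
  have hinj : Function.Injective fun i => Function.update x i (!x i) := by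
    intro i j h
    by_contra hij
    simpa [Function.update_of_ne hij] using congrFun h i
  have hnbhd : univ.filter (fun y => hammingDist x y = 1) =
      univ.image fun i => Function.update x i (!x i) := by
    ext y
    simp [hammingDist_eq_one_iff, eq_comm (a := y)]
  rw [adjOp, hnbhd, sum_image fun i _ j _ h => hinj h]

lemma hWt_update_not (x : Fin n → Bool) (i : Fin n) :
    hWt (Function.update x i (!x i)) = if x i then hWt x - 1 else hWt x + 1 := by
  unfold hWt
  cases hxi : x i
  · rw [if_neg Bool.false_ne_true,
      ← card_insert_of_notMem (s := univ.filter _) (a := i) (by simp [hxi])]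
    congr 1
    ext j
    rcases eq_or_ne j i with rfl | hj <;> simp [*]
  · rw [if_pos rfl, ← card_erase_of_mem (s := univ.filter _) (a := i) (by simp [hxi])]
    congr 1
    ext j
    rcases eq_or_ne j i with rfl | hj <;> simp [*]

lemma adjOp_comp_hWt (G : ℕ → ℝ) (x : Fin n → Bool) :
    adjOp (fun y => G (hWt y)) x = hWt x * G (hWt x - 1) + (n - hWt x) * G (hWt x + 1) := by
  have hdown : #(univ.filter fun i => x i = true) = hWt x := rfl
  have hup : #(univ.filter fun i => ¬x i = true) = n - hWt x := by
    have hsplit := card_filter_add_card_filter_not (s := univ) (fun i => x i = true)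
    rw [card_univ, Fintype.card_fin, hdown] at hsplit
    omega
  simp only [adjOp_eq_sum_update, hWt_update_not, apply_ite G]
  rw [sum_ite, sum_const, sum_const, hdown, hup, nsmul_eq_mul, nsmul_eq_mul,
    Nat.cast_sub (hWt_le x)]

lemma mul_eq_sqrt_mul_mul_sqrt {a b c d : ℝ} (ha : 0 ≤ a) (hb : 0 ≤ b) (hc : 0 ≤ c)
    (h : a * b = c * d) : a * b = √(a * c) * (√b * √d) := by
  rw [← sqrt_mul hb, ← sqrt_mul (mul_nonneg ha hc),
    show a * c * (b * d) = (a * b) * (a * b) by rw [mul_mul_mul_comm, ← h],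
    sqrt_mul_self (mul_nonneg ha hb)]

lemma succ_mul_choose_succ_eq {k : ℕ} (hk : k ≤ n) :
    ((k : ℝ) + 1) * n.choose (k + 1) = (n - k) * n.choose k := by
  rw [← Nat.cast_sub hk, mul_comm, mul_comm ((n - k : ℕ) : ℝ)]
  exact_mod_cast Nat.choose_succ_right_eq n k

lemma cast_mul_choose_eq_sqrt {k : ℕ} (hk : k ≤ n) :
    (k : ℝ) * n.choose k = √(k * (n + 1 - k)) * (√(n.choose k) * √(n.choose (k - 1))) := by
  rcases k with _ | k
  · simp
  have hkn : (k : ℝ) ≤ n := by exact_mod_cast Nat.le_of_succ_le hk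
  push_cast
  rw [show (n : ℝ) + 1 - (k + 1) = n - k by ring]
  exact mul_eq_sqrt_mul_mul_sqrt (by positivity) (by positivity) (by linarith)
    (succ_mul_choose_succ_eq (Nat.le_of_succ_le hk))

lemma cast_sub_mul_choose_eq_sqrt {k : ℕ} (hk : k ≤ n) :
    ((n : ℝ) - k) * n.choose k =
      √((n - k) * (k + 1)) * (√(n.choose k) * √(n.choose (k + 1))) :=
  mul_eq_sqrt_mul_mul_sqrt (by simpa using hk) (by positivity) (by positivity)
    (succ_mul_choose_succ_eq hk).symm

/-- The coefficient of `G ∘ hWt` on the indicator of layer `k` normalized in `ℓ²` for counting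
measure. -/
noncomputable def layerAmp (n : ℕ) (G : ℕ → ℝ) (k : ℕ) : ℝ := √(n.choose k) * G k

lemma sum_comp_hWt_mul_self (G : ℕ → ℝ) :
    ∑ x : Fin n → Bool, G (hWt x) * G (hWt x) =
      ∑ k ∈ range (n + 1), layerAmp n G k ^ 2 := by
  rw [sum_comp_hWt (fun k => G k * G k)]
  refine sum_congr rfl fun k _ => ?_
  rw [layerAmp, mul_pow, sq_sqrt (Nat.cast_nonneg _), nsmul_eq_mul]
  ring

lemma sum_adjOp_comp_hWt_mul (G : ℕ → ℝ) :
    ∑ x : Fin n → Bool, adjOp (fun y => G (hWt y)) x * G (hWt x) =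
      ∑ k ∈ range (n + 1), (√(k * (n + 1 - k)) * layerAmp n G (k - 1) +
        √((n - k) * (k + 1)) * layerAmp n G (k + 1)) * layerAmp n G k := by
  simp only [adjOp_comp_hWt]
  rw [sum_comp_hWt (fun k => (k * G (k - 1) + (n - k) * G (k + 1)) * G k)]
  refine sum_congr rfl fun k hk => ?_
  have hkn : k ≤ n := Nat.lt_succ_iff.1 (mem_range.1 hk)
  have hdown := cast_mul_choose_eq_sqrt hkn
  have hup := cast_sub_mul_choose_eq_sqrt hkn
  simp only [layerAmp, nsmul_eq_mul]
  linear_combination G (k - 1) * G k * hdown + G (k + 1) * G k * hup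

end Radial

section TestFunction

noncomputable def sineProfile (m j : ℕ) : ℝ := sin (j * (π / (m + 1)))

lemma sineProfile_zero (m : ℕ) : sineProfile m 0 = 0 := by simp [sineProfile]

lemma sineProfile_succ_self (m : ℕ) : sineProfile m (m + 1) = 0 := by
  rw [sineProfile, Nat.cast_succ, mul_div_cancel₀ _ (by positivity), sin_pi]

lemma sineProfile_nonneg {m j : ℕ} (hj : j ≤ m + 1) : 0 ≤ sineProfile m j := by
  refine sin_nonneg_of_nonneg_of_le_pi (by positivity) ?_
  calc (j : ℝ) * (π / (m + 1)) ≤ (m + 1) * (π / (m + 1)) := by gcongr; exact_mod_cast hj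
    _ = π := mul_div_cancel₀ _ (by positivity)

lemma sineProfile_pos {m j : ℕ} (hj₀ : 1 ≤ j) (hj : j ≤ m) : 0 < sineProfile m j := by
  have hj₀' : (0 : ℝ) < j := by exact_mod_cast hj₀
  refine sin_pos_of_pos_of_lt_pi (by positivity) ?_
  calc (j : ℝ) * (π / (m + 1)) < (m + 1) * (π / (m + 1)) := by
        gcongr; exact_mod_cast Nat.lt_succ_of_le hj
    _ = π := mul_div_cancel₀ _ (by positivity)

lemma sineProfile_sub_one_add_sineProfile_add_one (m : ℕ) {j : ℕ} (hj : 1 ≤ j) :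
    sineProfile m (j - 1) + sineProfile m (j + 1) = 2 * cos (π / (m + 1)) * sineProfile m j := by
  simp only [sineProfile, Nat.cast_sub hj, Nat.cast_add, Nat.cast_one, sub_mul, add_mul, one_mul,
    sin_sub, sin_add]
  ring

/-- The sine profile on the top `m` layers `r + 1 - m, …, r` of the ball; truncated subtraction
makes the lower layers read `sineProfile m 0 = 0`. -/
noncomputable def ballAmp (r m k : ℕ) : ℝ := if k ≤ r then sineProfile m (k + m - r) else 0

noncomputable def ballProfile (n r m k : ℕ) : ℝ := ballAmp r m k / √(n.choose k)

noncomputable def ballTestFn (n r m : ℕ) (x : Fin n → Bool) : ℝ := ballProfile n r m (hWt x)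

variable {n r m : ℕ}

lemma ballAmp_nonneg (k : ℕ) : 0 ≤ ballAmp r m k := by
  unfold ballAmp
  split_ifs
  · exact sineProfile_nonneg (by omega)
  · rfl

lemma layerAmp_ballProfile (hrn : r ≤ n) : layerAmp n (ballProfile n r m) = ballAmp r m := by
  funext k
  by_cases hk : k ≤ n
  · exact mul_div_cancel₀ _ (sqrt_pos.2 (by exact_mod_cast Nat.choose_pos hk)).ne'
  · simp [layerAmp, ballProfile, ballAmp, show ¬k ≤ r by omega]

lemma mul_sineProfile_sub_one_le (hmr : m ≤ r + 1) (hrn : r ≤ n) {k : ℕ} (hkr : k ≤ r) :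
    √((r + 2 - m) * (n - r)) * sineProfile m (k + m - r - 1) ≤
      √(k * (n + 1 - k)) * ballAmp r m (k - 1) := by
  rcases Nat.lt_or_ge (k + m) (r + 2) with hkm | hkm
  · rw [show k + m - r - 1 = 0 by omega, sineProfile_zero, mul_zero]
    exact mul_nonneg (sqrt_nonneg _) (ballAmp_nonneg _)
  have hk : (r : ℝ) + 2 - m ≤ k := by
    have : ((r + 2 : ℕ) : ℝ) ≤ (k + m : ℕ) := by exact_mod_cast hkm
    push_cast at this
    linarith
  have hkr' : (k : ℝ) ≤ r := by exact_mod_cast hkr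
  have hrn' : (r : ℝ) ≤ n := by exact_mod_cast hrn
  rw [ballAmp, if_pos (by omega), show k - 1 + m - r = k + m - r - 1 by omega]
  refine mul_le_mul_of_nonneg_right (sqrt_le_sqrt ?_) (sineProfile_nonneg (by omega))
  exact mul_le_mul hk (by linarith) (by linarith) (by positivity)

lemma mul_sineProfile_add_one_le (hmr : m ≤ r + 1) (hrn : r ≤ n) {k : ℕ} (hkr : k ≤ r)
    (hkm : r + 1 ≤ k + m) :
    √((r + 2 - m) * (n - r)) * sineProfile m (k + m - r + 1) ≤
      √((n - k) * (k + 1)) * ballAmp r m (k + 1) := by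
  rcases eq_or_lt_of_le hkr with rfl | hkr
  · rw [show k + m - k + 1 = m + 1 by omega, sineProfile_succ_self, mul_zero]
    exact mul_nonneg (sqrt_nonneg _) (ballAmp_nonneg _)
  have hmr' : (m : ℝ) ≤ r + 1 := by exact_mod_cast hmr
  have hkr' : (k : ℝ) ≤ r := by exact_mod_cast hkr.le
  have hkm' : (r : ℝ) + 1 ≤ k + m := by exact_mod_cast hkm
  have hrn' : (r : ℝ) ≤ n := by exact_mod_cast hrn
  rw [ballAmp, if_pos (by omega), show k + 1 + m - r = k + m - r + 1 by omega]
  refine mul_le_mul_of_nonneg_right (sqrt_le_sqrt ?_) (sineProfile_nonneg (by omega))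
  rw [mul_comm]
  exact mul_le_mul (by linarith) (by linarith) (by linarith) (by linarith)

lemma mul_ballAmp_sq_le (hmr : m ≤ r + 1) (hrn : r ≤ n) (k : ℕ) :
    2 * √((r + 2 - m) * (n - r)) * cos (π / (m + 1)) * ballAmp r m k ^ 2 ≤
      (√(k * (n + 1 - k)) * ballAmp r m (k - 1) + √((n - k) * (k + 1)) * ballAmp r m (k + 1)) *
        ballAmp r m k := by
  by_cases hwin : k ≤ r ∧ r + 1 ≤ k + m
  swap
  · have hk : ballAmp r m k = 0 := by
      unfold ballAmp
      split_ifs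
      · rw [show k + m - r = 0 by omega, sineProfile_zero]
      · rfl
    simp [hk]
  obtain ⟨hkr, hkm⟩ := hwin
  have hk : ballAmp r m k = sineProfile m (k + m - r) := if_pos hkr
  calc 2 * √((r + 2 - m) * (n - r)) * cos (π / (m + 1)) * ballAmp r m k ^ 2
      = (√((r + 2 - m) * (n - r)) * sineProfile m (k + m - r - 1) +
          √((r + 2 - m) * (n - r)) * sineProfile m (k + m - r + 1)) * ballAmp r m k := by
        rw [← mul_add, sineProfile_sub_one_add_sineProfile_add_one m (by omega), hk]
        ring
    _ ≤ _ := mul_le_mul_of_nonneg_right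
        (add_le_add (mul_sineProfile_sub_one_le hmr hrn hkr)
          (mul_sineProfile_add_one_le hmr hrn hkr hkm))
        (ballAmp_nonneg _)

lemma cubeInner_adjOp_ballTestFn_ge (hmr : m ≤ r + 1) (hrn : r ≤ n) :
    2 * √((r + 2 - m) * (n - r)) * cos (π / (m + 1)) *
        cubeInner (ballTestFn n r m) (ballTestFn n r m) ≤
      cubeInner (adjOp (ballTestFn n r m)) (ballTestFn n r m) := by
  unfold cubeInner ballTestFn
  rw [mul_div_assoc']
  gcongr
  rw [sum_adjOp_comp_hWt_mul, sum_comp_hWt_mul_self, layerAmp_ballProfile hrn, mul_sum]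
  exact sum_le_sum fun k _ => mul_ballAmp_sq_le hmr hrn k

lemma ballTestFn_ne_zero (hm : 1 ≤ m) (hrn : r ≤ n) : ballTestFn n r m ≠ 0 := by
  intro h
  have hsum := sum_comp_hWt_mul_self (n := n) (ballProfile n r m)
  rw [layerAmp_ballProfile hrn,
    sum_eq_zero fun x _ => by rw [show ballProfile n r m (hWt x) = 0 from congrFun h x, mul_zero]]
    at hsum
  have hr : 0 < ballAmp r m r ^ 2 := by
    rw [ballAmp, if_pos le_rfl, Nat.add_sub_cancel_left]
    exact pow_pos (sineProfile_pos hm le_rfl) 2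
  have := single_le_sum (fun k _ => sq_nonneg (ballAmp r m k))
    (mem_range.2 (Nat.lt_succ_of_le hrn))
  linarith

lemma hWt_le_of_ballTestFn_ne_zero {x : Fin n → Bool} (hx : ballTestFn n r m x ≠ 0) :
    hWt x ≤ r := by
  by_contra h
  exact hx (by simp [ballTestFn, ballProfile, ballAmp, h])

end TestFunction

section Estimates

lemma cos_pi_div_succ_nonneg {m : ℕ} (hm : 1 ≤ m) : 0 ≤ cos (π / (m + 1)) := by
  have hm' : (2 : ℝ) ≤ m + 1 := by exact_mod_cast Nat.succ_le_succ hm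
  refine cos_nonneg_of_neg_pi_div_two_le_of_le ?_ (div_le_div_of_nonneg_left pi_nonneg two_pos hm')
  have : 0 ≤ π / (m + 1) := by positivity
  linarith [pi_pos]

lemma sqrt_le_sqrt_add_of_le_add_sq {x y z : ℝ} (hy : 0 ≤ y) (hz : 0 ≤ z)
    (h : x ≤ y + z ^ 2) :
    √x ≤ √y + z := by
  rw [sqrt_le_left (by positivity)]
  nlinarith [sq_sqrt hy, sqrt_nonneg y]

variable {ε : ℝ} {n r m : ℕ}

lemma two_sqrt_mul_sub_le_of_le (hε : 0 < ε) (hrm : r ≤ m) (hrn : r ≤ n)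
    (hεn : 16 * m ≤ ε ^ 2 * n) :
    2 * √(r * (n - r)) ≤ ε * n := by
  have hrm' : (r : ℝ) ≤ m := by exact_mod_cast hrm
  have hrn' : (r : ℝ) ≤ n := by exact_mod_cast hrn
  have := sqrt_le_sqrt_add_of_le_add_sq le_rfl (by positivity : 0 ≤ ε * n / 4)
    (x := r * (n - r)) (by nlinarith)
  rw [sqrt_zero, zero_add] at this
  linarith [mul_nonneg hε.le (Nat.cast_nonneg (α := ℝ) n)]

lemma two_sqrt_mul_sub_le_two_sqrt_mul_cos (hε : 0 < ε) (hm : 2 ≤ m) (hmr : m ≤ r + 1)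
    (h2r : 2 * r ≤ n) (hεm : 10 ≤ ε * m) (hεn : 16 * m ≤ ε ^ 2 * n) :
    2 * √(r * (n - r)) - ε * n ≤ 2 * √((r + 2 - m) * (n - r)) * cos (π / (m + 1)) := by
  have hm' : (2 : ℝ) ≤ m := by exact_mod_cast hm
  have hmr' : (m : ℝ) ≤ r + 1 := by exact_mod_cast hmr
  have h2r' : 2 * (r : ℝ) ≤ n := by exact_mod_cast h2r
  set S := √((r + 2 - m) * (n - r) : ℝ)
  have hS : 2 * S ≤ n := by
    rw [← le_div_iff₀' two_pos, sqrt_le_left (by positivity)]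
    nlinarith
  have hsqrt : √(r * (n - r)) ≤ S + ε * n / 4 :=
    sqrt_le_sqrt_add_of_le_add_sq (by nlinarith) (by positivity) (by nlinarith)
  have hcos : 1 - ε / 2 ≤ cos (π / (m + 1)) := by
    refine le_trans ?_ one_sub_sq_div_two_le_cos
    have hθ : π ^ 2 / (m + 1) ^ 2 ≤ ε := by
      rw [div_le_iff₀ (by positivity)]
      nlinarith [pi_lt_d2, pi_pos]
    rw [div_pow]
    linarith
  nlinarith [sqrt_nonneg ((r + 2 - m) * (n - r) : ℝ), cos_le_one (π / (m + 1))]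

end Estimates

/-- For every `ε > 0` and all sufficiently large `n`, for every `1 ≤ r ≤ n/2` there is a
nonzero `f` supported on the Hamming ball of radius `r` around `0` with Rayleigh
quotient at least `2√(r(n − r)) − εn`, i.e. `λ_{B_r} ≥ 2√(r(n−r)) − εn`. -/
theorem ball_eigenvalue_lower_bound (ε : ℝ) (hε : 0 < ε) :
    ∃ N : ℕ, ∀ n : ℕ, N ≤ n → ∀ r : ℕ, 1 ≤ r → 2 * r ≤ n →
      ∃ f : (Fin n → Bool) → ℝ, f ≠ 0 ∧ (∀ x, f x ≠ 0 → hWt x ≤ r) ∧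
        cubeInner (adjOp f) f ≥
          (2 * Real.sqrt ((r : ℝ) * ((n : ℝ) - r)) - ε * n) * cubeInner f f := by
  set m := ⌈10 / ε⌉₊ + 2
  have hεm : 10 ≤ ε * m := by
    have := Nat.le_ceil (10 / ε)
    rw [div_le_iff₀ hε] at this
    push_cast [m]
    nlinarith
  refine ⟨⌈16 * m / ε ^ 2⌉₊, fun n hn r _ h2r => ?_⟩
  have hεn : 16 * (m : ℝ) ≤ ε ^ 2 * n := by
    have := (Nat.le_ceil _).trans (Nat.cast_le.2 hn)
    rw [div_le_iff₀ (by positivity)] at this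
    linarith
  have hrn : r ≤ n := by omega
  obtain ⟨m', hm', hm'r, hbound⟩ : ∃ m', 1 ≤ m' ∧ m' ≤ r + 1 ∧
      2 * √(r * (n - r)) - ε * n ≤ 2 * √((r + 2 - m') * (n - r)) * cos (π / (m' + 1)) := by
    by_cases hmr : m ≤ r + 1
    · exact ⟨m, by omega, hmr,
        two_sqrt_mul_sub_le_two_sqrt_mul_cos hε (by omega) hmr h2r hεm hεn⟩
    · refine ⟨r + 1, by omega, le_rfl, (sub_nonpos.2 ?_).trans ?_⟩
      · exact two_sqrt_mul_sub_le_of_le hε (by omega) hrn hεn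
      · exact mul_nonneg (by positivity) (cos_pi_div_succ_nonneg (by omega))
  exact ⟨ballTestFn n r m', ballTestFn_ne_zero hm' hrn, fun x => hWt_le_of_ballTestFn_ne_zero,
    (mul_le_mul_of_nonneg_right hbound (cubeInner_self_nonneg _)).trans
      (cubeInner_adjOp_ballTestFn_ge hm'r hrn)⟩
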